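/- Let z, z', q ∈ R^n and ε ∈ (0,1). Suppose ⟨z−z', q+z'⟩ ≥ ε·‖z−z'‖·‖q+z'‖ and ‖q+z'‖ ≠ 0. Define z'' = z' + α(q+z') with α = ε·‖z−z'‖/‖q+z'‖. Then ‖z−z''‖² ≤ (1−ε²)·‖z−z'‖². -/

import Mathlib

open scoped InnerProductSpace

theorem stmt2 (n : ℕ) (z z' q : EuclideanSpace ℝ (Fin n)) (ε : ℝ)
    (hε : ε ∈ Set.Ioo (0:ℝ) 1)
    (hcorr : ⟪z - z', q + z'⟫_ℝ ≥ ε * ‖z - z'‖ * ‖q + z'‖)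
    (hq : ‖q + z'‖ ≠ 0)
    (α : ℝ) (hα : α = ε * ‖z - z'‖ / ‖q + z'‖) :
    ‖z - (z' + α • (q + z'))‖^2 ≤ (1 - ε^2) * ‖z - z'‖^2 := by
  obtain ⟨hε0, hε1⟩ := hε
  have hqn : (0:ℝ) < ‖q + z'‖ := lt_of_le_of_ne (norm_nonneg _) (Ne.symm hq)
  have hα0 : 0 ≤ α := by
    rw [hα]
    positivity
  have key : z - (z' + α • (q + z')) = (z - z') - α • (q + z') := by
    abel
  rw [key, @norm_sub_sq_real]
  have hin : ⟪z - z', α • (q + z')⟫_ℝ = α * ⟪z - z', q + z'⟫_ℝ :=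
    real_inner_smul_right _ _ _
  rw [hin, norm_smul, Real.norm_eq_abs, abs_of_nonneg hα0]
  have h1 : α * ‖q + z'‖ = ε * ‖z - z'‖ := by
    rw [hα]
    field_simp
  have h2 : α * ⟪z - z', q + z'⟫_ℝ ≥ α * (ε * ‖z - z'‖ * ‖q + z'‖) :=
    mul_le_mul_of_nonneg_left hcorr hα0
  have h3 : α * (ε * ‖z - z'‖ * ‖q + z'‖) = ε ^ 2 * ‖z - z'‖ ^ 2 := by
    rw [show ε * ‖z - z'‖ * ‖q + z'‖ = α * ‖q + z'‖ * ‖q + z'‖ by rw [h1]]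
    rw [show α * (α * ‖q + z'‖ * ‖q + z'‖) = (α * ‖q + z'‖)^2 by ring, h1]
    ring
  calc ‖z - z'‖ ^ 2 - 2 * (α * ⟪z - z', q + z'⟫_ℝ) + (α * ‖q + z'‖) ^ 2
      ≤ ‖z - z'‖ ^ 2 - 2 * (ε ^ 2 * ‖z - z'‖ ^ 2) + (ε * ‖z - z'‖) ^ 2 := by
        rw [h1]
        nlinarith [h2, h3]
    _ = (1 - ε ^ 2) * ‖z - z'‖ ^ 2 := by ring
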